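/- Let V̂(x,y) = (x² − 3xy)² + (x² − 4xy − 2y²)². Suppose (x, y) : I → ℝ² is twice continuously differentiable on an open interval I and satisfies the closed-loop equations ẍ = −(∂V̂/∂x + ∂V̂/∂y) and ÿ = −(ẏ − ẋ) − (∂V̂/∂x + 2 ∂V̂/∂y), the partial derivatives being evaluated at (x(t), y(t)). Then for all t ∈ I, d/dt [ ẋ² − ẋ ẏ + ½ ẏ² + V̂(x,y) ] = −(ẏ − ẋ)². -/

import Mathlib

/-!
The energy `Ĥ = ½ ĝ(q̇, q̇) + V̂` with `ĝ = [[2, -1], [-1, 1]]` has time derivative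
`⟪ĝ q̇, q̈⟫ + ⟪dV̂, q̇⟫`. The closed loop reads `q̈ = -ĝ⁻¹ dV̂ - ĉ`, so the potential terms cancel
exactly and what remains is `-⟪ĝ q̇, ĉ⟫`; the `y`-component of `ĝ q̇` is `ẏ - ẋ`, which is also the
only component of `ĉ`.
-/

open Set

theorem ContDiffOn.hasDerivAt_deriv_of_isOpen {𝕜 F : Type*} [NontriviallyNormedField 𝕜]
    [NormedAddCommGroup F] [NormedSpace 𝕜 F] {f : 𝕜 → F} {s : Set 𝕜} {t : 𝕜}
    (hf : ContDiffOn 𝕜 2 f s) (hs : IsOpen s) (ht : t ∈ s) :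
    HasDerivAt (deriv f) (deriv (deriv f) t) t :=
  (((hf.deriv_of_isOpen hs (by norm_num : (1 : WithTop ℕ∞) + 1 ≤ 2)).contDiffAt
    (hs.mem_nhds ht)).differentiableAt one_ne_zero).hasDerivAt

theorem ContinuousLinearMap.apply_prod_eq_partials (L : ℝ × ℝ →L[ℝ] ℝ) (u v : ℝ) :
    L (u, v) = u * L (1, 0) + v * L (0, 1) := by
  have hdecomp : ((u, v) : ℝ × ℝ) = u • ((1 : ℝ), (0 : ℝ)) + v • ((0 : ℝ), (1 : ℝ)) := by
    simp
  rw [hdecomp, map_add, map_smul, map_smul, smul_eq_mul, smul_eq_mul]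

theorem hasDerivAt_comp_prodMk {V : ℝ × ℝ → ℝ} {x y : ℝ → ℝ} {x' y' t : ℝ}
    (hV : DifferentiableAt ℝ V (x t, y t)) (hx : HasDerivAt x x' t) (hy : HasDerivAt y y' t) :
    HasDerivAt (fun s => V (x s, y s))
      (x' * fderiv ℝ V (x t, y t) (1, 0) + y' * fderiv ℝ V (x t, y t) (0, 1)) t := by
  rw [← ContinuousLinearMap.apply_prod_eq_partials]
  exact hV.hasFDerivAt.comp_hasDerivAt t (hx.prodMk hy)

theorem hasDerivAt_kineticEnergy {u v : ℝ → ℝ} {u' v' t : ℝ}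
    (hu : HasDerivAt u u' t) (hv : HasDerivAt v v' t) :
    HasDerivAt (fun s => u s ^ 2 - u s * v s + (1 / 2) * v s ^ 2)
      ((2 * u t - v t) * u' + (v t - u t) * v') t := by
  refine (((hu.fun_pow 2).fun_sub (hu.fun_mul hv)).fun_add
    ((hv.fun_pow 2).const_mul (1 / 2))).congr_deriv ?_
  push_cast
  ring

theorem statement18 (V : ℝ × ℝ → ℝ)
    (hV : ∀ p : ℝ × ℝ, V p =
      (p.1 ^ 2 - 3 * p.1 * p.2) ^ 2 + (p.1 ^ 2 - 4 * p.1 * p.2 - 2 * p.2 ^ 2) ^ 2)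
    (a c : ℝ) (x y : ℝ → ℝ)
    (hx : ContDiffOn ℝ 2 x (Ioo a c)) (hy : ContDiffOn ℝ 2 y (Ioo a c))
    (heq1 : ∀ t ∈ Ioo a c,
      deriv (deriv x) t =
        -(fderiv ℝ V (x t, y t) (1, 0) + fderiv ℝ V (x t, y t) (0, 1)))
    (heq2 : ∀ t ∈ Ioo a c,
      deriv (deriv y) t = -(deriv y t - deriv x t)
        - (fderiv ℝ V (x t, y t) (1, 0) + 2 * fderiv ℝ V (x t, y t) (0, 1))) :
    ∀ t ∈ Ioo a c,
      deriv (fun s => (deriv x s) ^ 2 - deriv x s * deriv y s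
        + (1 / 2) * (deriv y s) ^ 2 + V (x s, y s)) t
      = -(deriv y t - deriv x t) ^ 2 := by
  have hVdiff : Differentiable ℝ V := by
    rw [funext hV]
    fun_prop
  intro t ht
  have hmem := isOpen_Ioo.mem_nhds ht
  have hxt := ((hx.contDiffAt hmem).differentiableAt two_ne_zero).hasDerivAt
  have hyt := ((hy.contDiffAt hmem).differentiableAt two_ne_zero).hasDerivAt
  have henergy := (hasDerivAt_kineticEnergy (hx.hasDerivAt_deriv_of_isOpen isOpen_Ioo ht)
    (hy.hasDerivAt_deriv_of_isOpen isOpen_Ioo ht)).fun_add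
    (hasDerivAt_comp_prodMk (hVdiff _) hxt hyt)
  rw [henergy.deriv, heq1 t ht, heq2 t ht]
  ring
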